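/- arXiv:math/0107021 — 7 statements merged into one kernel-verified Lean document; each statement's English description precedes it below -/
import Mathlib

section
/- Let X be a quandle, A an abelian group (written multiplicatively), and φ : X × X → A a function satisfying the quandle 2-cocycle conditions: φ(x,x)=1 for all x, and φ(x₁,x₂)φ(x₁*x₂,x₃) = φ(x₁,x₃)φ(x₁*x₃, x₂*x₃) for all x₁,x₂,x₃. Then the set A × X with operation (a₁,x₁)*(a₂,x₂) = (a₁·φ(x₁,x₂), x₁*x₂) is a quandle. -/
/-! The second coordinate of `E(X,A,φ)` just computes in `X`, and on the first coordinate the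
three quandle axioms reduce to `φ(x,x) = 1`, to right multiplication by `φ(x,y)` being invertible
in `A`, and to the cocycle identity. -/

namespace Quandle

variable {X A : Type*}

def extensionOp [Mul A] (op : X → X → X) (φ : X → X → A) (u v : A × X) : A × X :=
  (u.1 * φ u.2 v.2, op u.2 v.2)

theorem extensionOp_self [MulOneClass A] {op : X → X → X} (hidem : ∀ x, op x x = x)
    {φ : X → X → A} (hφ : ∀ x, φ x x = 1) (u : A × X) : extensionOp op φ u u = u := by
  simp [extensionOp, hφ, hidem]

theorem bijective_extensionOp_right [Group A] {op : X → X → X} {y : X}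
    (hbij : Function.Bijective (fun x => op x y)) (φ : X → X → A) (b : A) :
    Function.Bijective (fun u : A × X => extensionOp op φ u (b, y)) := by
  obtain ⟨inv, hleft, hright⟩ := Function.bijective_iff_has_inverse.mp hbij
  refine Function.bijective_iff_has_inverse.mpr
    ⟨fun v => (v.1 * (φ (inv v.2) y)⁻¹, inv v.2), fun u => ?_, fun v => ?_⟩
  · simp [extensionOp, hleft u.2]
  · simp [extensionOp, hright v.2]

theorem extensionOp_distrib [Semigroup A] {op : X → X → X}
    (hdist : ∀ a b c, op (op a b) c = op (op a c) (op b c)) {φ : X → X → A}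
    (hφ : ∀ x₁ x₂ x₃, φ x₁ x₂ * φ (op x₁ x₂) x₃ = φ x₁ x₃ * φ (op x₁ x₃) (op x₂ x₃))
    (u v w : A × X) :
    extensionOp op φ (extensionOp op φ u v) w =
      extensionOp op φ (extensionOp op φ u w) (extensionOp op φ v w) := by
  simp only [extensionOp, Prod.mk.injEq]
  rw [mul_assoc, mul_assoc, hφ]
  exact ⟨rfl, hdist _ _ _⟩

end Quandle

open Quandle in
/-- the abelian extension E(X,A,φ) = A × X of a quandle X by a 2-cocycle φ
is a quandle. -/
theorem abelian_extension_is_quandle {X A : Type*} [CommGroup A]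
    (op : X → X → X)
    (hidem : ∀ a, op a a = a)
    (hbij : ∀ b, Function.Bijective (fun x => op x b))
    (hdist : ∀ a b c, op (op a b) c = op (op a c) (op b c))
    (φ : X → X → A)
    (hφ1 : ∀ x, φ x x = 1)
    (hφ2 : ∀ x₁ x₂ x₃, φ x₁ x₂ * φ (op x₁ x₂) x₃ = φ x₁ x₃ * φ (op x₁ x₃) (op x₂ x₃)) :
    let eop : A × X → A × X → A × X := fun u v => (u.1 * φ u.2 v.2, op u.2 v.2)
    (∀ u : A × X, eop u u = u) ∧
    (∀ v : A × X, Function.Bijective (fun u : A × X => eop u v)) ∧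
    (∀ u v w : A × X, eop (eop u v) w = eop (eop u w) (eop v w)) :=
  ⟨extensionOp_self hidem hφ1, fun v => bijective_extensionOp_right (hbij v.2) φ v.1,
    extensionOp_distrib hdist hφ2⟩
end

section
/- Let q, m be positive integers and let E = Z/q^{m+1} with quandle operation A*B = (1-q)A + qB mod q^{m+1}, and X = Z/q^m with the analogous operation A*B = (1-q)A + qB mod q^m. Write elements of E in q-ary expansion A = A_m q^m + ... + A_1 q + A_0 with 0 ≤ A_j < q. Then the map f : E → Z/q × X defined by f(A) = (A_m mod q, A mod q^m) is a bijection, and there is a function φ : X × X → Z/q (namely φ(X,Y) = (s(X)*s(Y) - s(X*Y))/q^m where s : Z/q^m → Z/q^{m+1} is the section sending a residue in {0,...,q^m - 1} to itself) such that f(A*B) = (A_m + φ(A mod q^m, B mod q^m), (A mod q^m)*(B mod q^m)) for all A,B ∈ E. -/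
/-- The Alexander quandle operation a*b = Ta + (1-T)b on Z/n where T acts by 1-q,
i.e. a*b = (1-q)a + qb. -/
def dop (q : ℕ) {n : ℕ} (a b : ZMod n) : ZMod n :=
  (1 - (q : ZMod n)) * a + (q : ZMod n) * b

/-- The set-theoretic section Z/q^m → Z/q^{m+1} sending a residue in {0,…,q^m-1} to itself. -/
def sec (q m : ℕ) (x : ZMod (q ^ m)) : ZMod (q ^ (m + 1)) := (x.val : ZMod (q ^ (m + 1)))

/-- Reduction Z/q^{m+1} → Z/q^m. -/
def red (q m : ℕ) (a : ZMod (q ^ (m + 1))) : ZMod (q ^ m) := (a.val : ZMod (q ^ m))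

/-- The top q-ary digit A_m of A ∈ Z/q^{m+1}. -/
def topc (q m : ℕ) (a : ZMod (q ^ (m + 1))) : ZMod q := ((a.val / q ^ m : ℕ) : ZMod q)

/-- The cocycle φ(X,Y) = (s(X)*s(Y) - s(X*Y))/q^m. -/
def phiExt (q m : ℕ) (x y : ZMod (q ^ m)) : ZMod q :=
  (((dop q (sec q m x) (sec q m y) - sec q m (dop q x y)).val / q ^ m : ℕ) : ZMod q)

/-!
Every `A ∈ ℤ/q^{m+1}` is uniquely `s(Ā) + A_m q^m` with `A_m < q`, which gives the bijection.
Since `q · q^m = 0`, the top digit of `B` disappears from `A * B = (1-q)A + qB`, so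
`A * B = s(Ā) * s(B̄) + A_m q^m`; and `s(Ā) * s(B̄) = s(Ā * B̄) + φ(Ā, B̄) q^m` because both sides
reduce to `Ā * B̄` modulo `q^m`.
-/

theorem map_dop {n k : ℕ} (f : ZMod n →+* ZMod k) (q : ℕ) (a b : ZMod n) :
    f (dop q a b) = dop q (f a) (f b) := by
  simp only [dop, map_add, map_mul, map_sub, map_one, map_natCast]

section

variable {q m : ℕ} [NeZero q]

theorem red_eq_castHom :
    red q m = ZMod.castHom (pow_dvd_pow q m.le_succ) (ZMod (q ^ m)) := by
  ext a
  rw [red, ZMod.natCast_val, ZMod.castHom_apply]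

theorem red_dop (a b : ZMod (q ^ (m + 1))) :
    red q m (dop q a b) = dop q (red q m a) (red q m b) := by
  rw [red_eq_castHom, map_dop]

theorem val_sec (x : ZMod (q ^ m)) : (sec q m x).val = x.val := by
  rw [sec, ZMod.val_natCast, Nat.mod_eq_of_lt]
  exact x.val_lt.trans_le (Nat.pow_le_pow_right (NeZero.pos q) m.le_succ)

theorem red_sec (x : ZMod (q ^ m)) : red q m (sec q m x) = x := by
  rw [red, val_sec, ZMod.natCast_zmod_val]

theorem red_sec_add_natCast_mul_pow (x : ZMod (q ^ m)) (k : ℕ) :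
    red q m (sec q m x + k * (q : ZMod (q ^ (m + 1))) ^ m) = x := by
  have hqm : (q : ZMod (q ^ m)) ^ m = 0 := by exact_mod_cast ZMod.natCast_self (q ^ m)
  rw [red_eq_castHom, map_add, map_mul, map_pow, map_natCast, map_natCast, hqm, mul_zero, add_zero,
    ← red_eq_castHom, red_sec]

theorem sec_red_add_natCast_mul_pow (a : ZMod (q ^ (m + 1))) :
    sec q m (red q m a) + ((a.val / q ^ m : ℕ) : ZMod (q ^ (m + 1))) * (q : ZMod (q ^ (m + 1))) ^ m
      = a := by
  rw [sec, red, ZMod.val_natCast, ← Nat.cast_pow, ← Nat.cast_mul, ← Nat.cast_add, Nat.mod_add_div',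
    ZMod.natCast_zmod_val]

theorem eq_natCast_mul_pow_of_red_eq_zero {d : ZMod (q ^ (m + 1))} (hd : red q m d = 0) :
    d = ((d.val / q ^ m : ℕ) : ZMod (q ^ (m + 1))) * (q : ZMod (q ^ (m + 1))) ^ m := by
  conv_lhs => rw [← sec_red_add_natCast_mul_pow d, hd]
  simp [sec]

theorem val_div_pow_lt (a : ZMod (q ^ (m + 1))) : a.val / q ^ m < q := by
  rw [Nat.div_lt_iff_lt_mul (pow_pos (NeZero.pos q) m), ← pow_succ']
  exact a.val_lt

theorem val_sec_add_natCast_mul_pow (x : ZMod (q ^ m)) (k : ℕ) :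
    (sec q m x + k * (q : ZMod (q ^ (m + 1))) ^ m).val = x.val + k % q * q ^ m := by
  have hval : ((k * q ^ m : ℕ) : ZMod (q ^ (m + 1))).val = k % q * q ^ m := by
    rw [ZMod.val_natCast, pow_succ', Nat.mul_mod_mul_right]
  have hlt : x.val + k % q * q ^ m < q ^ (m + 1) :=
    calc x.val + k % q * q ^ m < q ^ m + k % q * q ^ m := by
          have := x.val_lt
          omega
      _ = (k % q + 1) * q ^ m := by ring
      _ ≤ q * q ^ m := Nat.mul_le_mul_right _ (Nat.mod_lt k (NeZero.pos q))
      _ = q ^ (m + 1) := (pow_succ' q m).symm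
  rw [← Nat.cast_pow, ← Nat.cast_mul, ZMod.val_add_of_lt (by rwa [val_sec, hval]), val_sec, hval]

theorem topc_sec_add_natCast_mul_pow (x : ZMod (q ^ m)) (k : ℕ) :
    topc q m (sec q m x + k * (q : ZMod (q ^ (m + 1))) ^ m) = k := by
  rw [topc, val_sec_add_natCast_mul_pow, Nat.add_mul_div_right _ _ (pow_pos (NeZero.pos q) m),
    Nat.div_eq_of_lt x.val_lt, zero_add, ZMod.natCast_mod]

theorem sec_dop_add_phiExt (x y : ZMod (q ^ m)) :
    dop q (sec q m x) (sec q m y) = sec q m (dop q x y)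
      + (((dop q (sec q m x) (sec q m y) - sec q m (dop q x y)).val / q ^ m : ℕ)
        : ZMod (q ^ (m + 1))) * (q : ZMod (q ^ (m + 1))) ^ m := by
  have hred : red q m (dop q (sec q m x) (sec q m y) - sec q m (dop q x y)) = 0 := by
    rw [red_eq_castHom, map_sub, ← red_eq_castHom, red_dop, red_sec, red_sec, red_sec, sub_self]
  rw [← eq_natCast_mul_pow_of_red_eq_zero hred, add_sub_cancel]

theorem topc_dop (a b : ZMod (q ^ (m + 1))) :
    topc q m (dop q a b) = topc q m a + phiExt q m (red q m a) (red q m b) := by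
  set x := red q m a
  set y := red q m b
  have ha := sec_red_add_natCast_mul_pow a
  have hb := sec_red_add_natCast_mul_pow b
  have hφ := sec_dop_add_phiExt x y
  set t := a.val / q ^ m
  set d := (dop q (sec q m x) (sec q m y) - sec q m (dop q x y)).val / q ^ m
  have hqm : (q : ZMod (q ^ (m + 1))) * (q : ZMod (q ^ (m + 1))) ^ m = 0 := by
    rw [← pow_succ']
    exact_mod_cast ZMod.natCast_self (q ^ (m + 1))
  have key :
      dop q a b = sec q m (dop q x y) + ((d + t : ℕ) : ZMod (q ^ (m + 1))) * (q : ZMod _) ^ m := by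
    rw [← ha, ← hb]
    unfold dop at hφ ⊢
    push_cast
    linear_combination hφ + (((b.val / q ^ m : ℕ) : ZMod (q ^ (m + 1))) - t) * hqm
  calc topc q m (dop q a b) = ((d + t : ℕ) : ZMod q) := by rw [key, topc_sec_add_natCast_mul_pow]
    _ = topc q m a + phiExt q m x y := by rw [Nat.cast_add, add_comm]; rfl

theorem bijective_topc_red :
    Function.Bijective (fun a : ZMod (q ^ (m + 1)) => (topc q m a, red q m a)) := by
  refine Function.bijective_iff_has_inverse.mpr
    ⟨fun p => sec q m p.2 + (p.1.val : ZMod (q ^ (m + 1))) * (q : ZMod _) ^ m,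
      fun a => ?_, fun p => ?_⟩
  · have htopc : (topc q m a).val = a.val / q ^ m := by
      rw [topc, ZMod.val_natCast, Nat.mod_eq_of_lt (val_div_pow_lt a)]
    simp only [htopc, sec_red_add_natCast_mul_pow]
  · simp only [topc_sec_add_natCast_mul_pow, ZMod.natCast_zmod_val, red_sec_add_natCast_mul_pow]

end

theorem extension_Zq_power_general (q m : ℕ) (hq : 0 < q) :
    Function.Bijective (fun A : ZMod (q ^ (m + 1)) => (topc q m A, red q m A)) ∧
    (∀ A B : ZMod (q ^ (m + 1)),
      (topc q m (dop q A B), red q m (dop q A B)) =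
        (topc q m A + phiExt q m (red q m A) (red q m B),
          dop q (red q m A) (red q m B))) := by
  have : NeZero q := ⟨hq.ne'⟩
  exact ⟨bijective_topc_red, fun A B => Prod.ext (topc_dop A B) (red_dop A B)⟩

/-- Z/q^{m+1} with a*b = (1-q)a+qb is the abelian extension of Z/q^m by φ:
the map f(A) = (A_m, A mod q^m) is a bijection and f(A*B) = (A_m + φ(Ā,B̄), Ā*B̄). -/
theorem extension_Zq_power (q m : ℕ) (hq : 0 < q) (hm : 0 < m) :
    Function.Bijective (fun A : ZMod (q ^ (m + 1)) => (topc q m A, red q m A)) ∧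
    (∀ A B : ZMod (q ^ (m + 1)),
      (topc q m (dop q A B), red q m (dop q A B)) =
        (topc q m A + phiExt q m (red q m A) (red q m B),
          dop q (red q m A) (red q m B))) :=
  extension_Zq_power_general q m hq
end

section
/- Let q, m be positive integers, X = Z_{q^m}[T,T^{-1}]/(T-1+q) (i.e. Z/q^m with quandle operation a*b = (1-q)a + qb), and s : Z/q^m → Z/q^{m+1} the set-theoretic section sending the residue class of an integer in {0,...,q^m-1} to its class mod q^{m+1}. Then for all x,y ∈ X, the integer s(x)*s(y) - s(x*y) (computed in Z/q^{m+1}, where * on Z/q^{m+1} is a*b=(1-q)a+qb) is divisible by q^m, and the resulting function φ(x,y) = (s(x)*s(y) - s(x*y))/q^m mod q defines a quandle 2-cocycle of X with values in Z/q. -/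
theorem ZMod.val_intCast_pow_mul {q : ℕ} (hq : 0 < q) (m : ℕ) (c : ℤ) :
    (((q : ℤ) ^ m * c : ℤ) : ZMod (q ^ (m + 1))).val = q ^ m * (c % q).toNat := by
  have : NeZero (q ^ (m + 1)) := ⟨(pow_pos hq _).ne'⟩
  have hc : 0 ≤ c % q := Int.emod_nonneg _ (by exact_mod_cast hq.ne')
  have hmod : ((q : ℤ) ^ m * c) % (q : ℤ) ^ (m + 1) = (q : ℤ) ^ m * (c % q) := by
    rw [pow_succ]
    exact Int.mul_emod_mul_of_pos _ _ (by positivity)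
  have h := ZMod.val_intCast (n := q ^ (m + 1)) ((q : ℤ) ^ m * c)
  rw [Nat.cast_pow, hmod, ← Int.toNat_of_nonneg hc] at h
  exact_mod_cast h

theorem ZMod.natCast_val_intCast_pow_mul_div {q : ℕ} (hq : 0 < q) (m : ℕ) (c : ℤ) :
    (((((q : ℤ) ^ m * c : ℤ) : ZMod (q ^ (m + 1))).val / q ^ m : ℕ) : ZMod q) = c := by
  have hc : 0 ≤ c % q := Int.emod_nonneg _ (by exact_mod_cast hq.ne')
  rw [ZMod.val_intCast_pow_mul hq, Nat.mul_div_cancel_left _ (pow_pos hq m),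
    ← Int.cast_natCast, Int.toNat_of_nonneg hc, ZMod.intCast_mod]

theorem dop_self (q : ℕ) {n : ℕ} (x : ZMod n) : dop q x x = x := by
  simp only [dop]; ring

theorem dop_dop_distrib (q : ℕ) {n : ℕ} (x₁ x₂ x₃ : ZMod n) :
    dop q (dop q x₁ x₂) x₃ = dop q (dop q x₁ x₃) (dop q x₂ x₃) := by
  simp only [dop]; ring

namespace SectionDefect

variable (q m : ℕ)

def defect (x y : ZMod (q ^ m)) : ℤ :=
  (1 - (q : ℤ)) * x.val + q * y.val - (dop q x y).val

def defectQuot (x y : ZMod (q ^ m)) : ℤ :=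
  defect q m x y / (q : ℤ) ^ m

variable {q m}

theorem pow_dvd_defect (hq : 0 < q) (x y : ZMod (q ^ m)) :
    (q : ℤ) ^ m ∣ defect q m x y := by
  have : NeZero (q ^ m) := ⟨(pow_pos hq m).ne'⟩
  rw [← Nat.cast_pow, ← ZMod.intCast_zmod_eq_zero_iff_dvd]
  simp only [defect, Int.cast_sub, Int.cast_add, Int.cast_mul, Int.cast_one, Int.cast_natCast,
    ZMod.natCast_zmod_val, dop]
  ring

theorem pow_mul_defectQuot (hq : 0 < q) (x y : ZMod (q ^ m)) :
    (q : ℤ) ^ m * defectQuot q m x y = defect q m x y :=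
  Int.mul_ediv_cancel' (pow_dvd_defect hq x y)

theorem dop_sec_sub_sec_dop (x y : ZMod (q ^ m)) :
    dop q (sec q m x) (sec q m y) - sec q m (dop q x y) =
      (defect q m x y : ZMod (q ^ (m + 1))) := by
  simp only [defect, dop, sec, Int.cast_sub, Int.cast_add, Int.cast_mul, Int.cast_one,
    Int.cast_natCast]

theorem phiExt_eq_defectQuot (hq : 0 < q) (x y : ZMod (q ^ m)) :
    phiExt q m x y = defectQuot q m x y := by
  rw [phiExt, dop_sec_sub_sec_dop, ← pow_mul_defectQuot hq,
    ZMod.natCast_val_intCast_pow_mul_div hq]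

theorem defect_self (x : ZMod (q ^ m)) : defect q m x x = 0 := by
  rw [defect, dop_self]; ring

theorem defect_cocycle (x₁ x₂ x₃ : ZMod (q ^ m)) :
    defect q m x₁ x₂ + defect q m (dop q x₁ x₂) x₃
        - (defect q m x₁ x₃ + defect q m (dop q x₁ x₃) (dop q x₂ x₃)) =
      q * ((x₂.val : ℤ) - (dop q x₁ x₂).val + (dop q x₁ x₃).val - (dop q x₂ x₃).val) := by
  rw [defect, defect, defect, defect, dop_dop_distrib]; ring

theorem pow_dvd_cocycle_remainder (hq : 0 < q) (x₁ x₂ x₃ : ZMod (q ^ m)) :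
    (q : ℤ) ^ m ∣ (x₂.val : ℤ) - (dop q x₁ x₂).val + (dop q x₁ x₃).val - (dop q x₂ x₃).val := by
  have : NeZero (q ^ m) := ⟨(pow_pos hq m).ne'⟩
  rw [← Nat.cast_pow, ← ZMod.intCast_zmod_eq_zero_iff_dvd]
  simp only [Int.cast_sub, Int.cast_add, Int.cast_natCast, ZMod.natCast_zmod_val, dop]
  ring

theorem dvd_defectQuot_cocycle (hq : 0 < q) (x₁ x₂ x₃ : ZMod (q ^ m)) :
    (q : ℤ) ∣ defectQuot q m x₁ x₂ + defectQuot q m (dop q x₁ x₂) x₃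
        - (defectQuot q m x₁ x₃ + defectQuot q m (dop q x₁ x₃) (dop q x₂ x₃)) := by
  obtain ⟨k, hk⟩ := pow_dvd_cocycle_remainder hq x₁ x₂ x₃
  refine ⟨k, mul_left_cancel₀ (pow_ne_zero m (by exact_mod_cast hq.ne' : (q : ℤ) ≠ 0)) ?_⟩
  calc (q : ℤ) ^ m * (defectQuot q m x₁ x₂ + defectQuot q m (dop q x₁ x₂) x₃
        - (defectQuot q m x₁ x₃ + defectQuot q m (dop q x₁ x₃) (dop q x₂ x₃)))
      = defect q m x₁ x₂ + defect q m (dop q x₁ x₂) x₃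
        - (defect q m x₁ x₃ + defect q m (dop q x₁ x₃) (dop q x₂ x₃)) := by
        simp only [← pow_mul_defectQuot hq]; ring
    _ = (q : ℤ) ^ m * (q * k) := by rw [defect_cocycle, hk]; ring

end SectionDefect

open SectionDefect in
theorem section_defect_cocycle_general (q m : ℕ) (hq : 0 < q) :
    (∀ x y : ZMod (q ^ m),
      q ^ m ∣ (dop q (sec q m x) (sec q m y) - sec q m (dop q x y)).val) ∧
    (∀ x : ZMod (q ^ m), phiExt q m x x = 0) ∧
    (∀ x₁ x₂ x₃ : ZMod (q ^ m),
      phiExt q m x₁ x₂ + phiExt q m (dop q x₁ x₂) x₃ =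
        phiExt q m x₁ x₃ + phiExt q m (dop q x₁ x₃) (dop q x₂ x₃)) := by
  refine ⟨fun x y => ?_, fun x => ?_, fun x₁ x₂ x₃ => ?_⟩
  · rw [dop_sec_sub_sec_dop, ← pow_mul_defectQuot hq, ZMod.val_intCast_pow_mul hq]
    exact dvd_mul_right _ _
  · rw [phiExt_eq_defectQuot hq, defectQuot, defect_self, Int.zero_ediv, Int.cast_zero]
  · simp only [phiExt_eq_defectQuot hq, ← Int.cast_add]
    exact ((ZMod.intCast_eq_intCast_iff_dvd_sub _ _ q).mpr
      (dvd_defectQuot_cocycle hq x₁ x₂ x₃)).symm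

/-- s(x)*s(y) - s(x*y) is divisible by q^m, and the resulting function φ
is a quandle 2-cocycle of Z/q^m (with operation a*b = (1-q)a+qb) valued in Z/q. -/
theorem section_defect_cocycle (q m : ℕ) (hq : 0 < q) (hm : 0 < m) :
    (∀ x y : ZMod (q ^ m),
      q ^ m ∣ (dop q (sec q m x) (sec q m y) - sec q m (dop q x y)).val) ∧
    (∀ x : ZMod (q ^ m), phiExt q m x x = 0) ∧
    (∀ x₁ x₂ x₃ : ZMod (q ^ m),
      phiExt q m x₁ x₂ + phiExt q m (dop q x₁ x₂) x₃ =
        phiExt q m x₁ x₃ + phiExt q m (dop q x₁ x₃) (dop q x₂ x₃)) :=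
  section_defect_cocycle_general q m hq
end

section
/- Let q, m be positive integers, E = Z_q[T,T^{-1}]/((1-T)^{m+1}) and X = Z_q[T,T^{-1}]/((1-T)^m) with Alexander quandle operation a*b = T a + (1-T) b. Writing elements of E uniquely as A = Σ_{j=0}^{m} A_j (1-T)^j with A_j ∈ Z/q, the map f : E → Z/q × X, f(A) = (A_m, A mod (1-T)^m) satisfies f(A*B) = (A_m + φ(Ā, B̄), Ā * B̄) where Ā, B̄ denote reductions mod (1-T)^m and φ(Ā, B̄) = B_{m-1} - A_{m-1}. In particular φ is a quandle 2-cocycle of X with values in Z/q and E is isomorphic to the abelian extension E(X, Z/q, φ). -/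
/-!
Reduction modulo `(1-T)^m` only forgets the top coordinate, and multiplication by `T` only shifts
coordinates upwards, so reduction is a quandle homomorphism, while the top coordinate of `A * B`
is `A_m - (A_{m-1} - B_{m-1})`. The cocycle `φ(x, y) = g y - g x`, with `g` the linear coordinate
`x ↦ x_{m-1}`, satisfies the cocycle identity because `x₁ * x₂ - x₂` and `x₁ * x₃ - x₂ * x₃` both
equal `T (x₁ - x₂)`.
-/

/-- Multiplication by T = 1 - (1-T) on Z_q[T,T⁻¹]/((1-T)^m), in coordinates with respect to
the basis (1-T)^j, j = 0,…,m-1: (TA)_j = A_j - A_{j-1}. -/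
def mulT (q m : ℕ) (A : Fin m → ZMod q) : Fin m → ZMod q :=
  fun j => A j - (if h : 0 < (j : ℕ) then A ⟨(j : ℕ) - 1, by omega⟩ else 0)

/-- The Alexander quandle operation a*b = Ta + (1-T)b on Z_q[T,T⁻¹]/((1-T)^m), in
coordinates. -/
def aop (q m : ℕ) (A B : Fin m → ZMod q) : Fin m → ZMod q :=
  fun j => mulT q m A j + (B j - mulT q m B j)

/-- Reduction mod (1-T)^m : keep the coefficients of (1-T)^j for j < m. -/
def redA (q m : ℕ) (A : Fin (m + 1) → ZMod q) : Fin m → ZMod q :=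
  fun j => A j.castSucc

/-- The cocycle φ(Ā,B̄) = B_{m-1} - A_{m-1}. -/
def phiA (q m : ℕ) (hm : 0 < m) (A B : Fin m → ZMod q) : ZMod q :=
  B ⟨m - 1, by omega⟩ - A ⟨m - 1, by omega⟩

section

variable {q m : ℕ}

theorem mulT_sub (A B : Fin m → ZMod q) : mulT q m (A - B) = mulT q m A - mulT q m B := by
  funext j
  simp only [mulT, Pi.sub_apply]
  split_ifs <;> ring

theorem aop_sub_right (A B : Fin m → ZMod q) : aop q m A B - B = mulT q m (A - B) := by
  funext j
  simp only [aop, mulT_sub, Pi.sub_apply]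
  ring

theorem aop_sub_aop (A B C : Fin m → ZMod q) :
    aop q m A C - aop q m B C = mulT q m (A - B) := by
  funext j
  simp only [aop, mulT_sub, Pi.sub_apply]
  ring

theorem mulT_castSucc (A : Fin (m + 1) → ZMod q) (j : Fin m) :
    mulT q (m + 1) A j.castSucc = mulT q m (redA q m A) j :=
  rfl

theorem redA_aop (A B : Fin (m + 1) → ZMod q) :
    redA q m (aop q (m + 1) A B) = aop q m (redA q m A) (redA q m B) := by
  funext j
  simp only [aop, redA, mulT_castSucc]

theorem aop_last (hm : 0 < m) (A B : Fin (m + 1) → ZMod q) :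
    aop q (m + 1) A B (Fin.last m) =
      A (Fin.last m) + phiA q m hm (redA q m A) (redA q m B) := by
  simp only [aop, mulT, phiA, redA, Fin.val_last, dif_pos hm]
  have : (⟨m - 1, by omega⟩ : Fin m).castSucc = (⟨m - 1, by omega⟩ : Fin (m + 1)) := rfl
  rw [this]
  ring

theorem phiA_self (hm : 0 < m) (x : Fin m → ZMod q) : phiA q m hm x x = 0 :=
  sub_self _

theorem phiA_cocycle (hm : 0 < m) (x₁ x₂ x₃ : Fin m → ZMod q) :
    phiA q m hm x₁ x₂ + phiA q m hm (aop q m x₁ x₂) x₃ =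
      phiA q m hm x₁ x₃ + phiA q m hm (aop q m x₁ x₃) (aop q m x₂ x₃) := by
  have h₁₂ := congrFun (aop_sub_right x₁ x₂) ⟨m - 1, by omega⟩
  have h₁₂₃ := congrFun (aop_sub_aop x₁ x₂ x₃) ⟨m - 1, by omega⟩
  simp only [Pi.sub_apply] at h₁₂ h₁₂₃
  simp only [phiA]
  linear_combination h₁₂₃ - h₁₂

end

theorem extension_one_minus_T_general (q m : ℕ) (hm : 0 < m) :
    Function.Bijective
      (fun A : Fin (m + 1) → ZMod q => (A (Fin.last m), redA q m A)) ∧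
    (∀ A B : Fin (m + 1) → ZMod q,
      (aop q (m + 1) A B (Fin.last m), redA q m (aop q (m + 1) A B)) =
        (A (Fin.last m) + phiA q m hm (redA q m A) (redA q m B),
          aop q m (redA q m A) (redA q m B))) ∧
    (∀ x : Fin m → ZMod q, phiA q m hm x x = 0) ∧
    (∀ x₁ x₂ x₃ : Fin m → ZMod q,
      phiA q m hm x₁ x₂ + phiA q m hm (aop q m x₁ x₂) x₃ =
        phiA q m hm x₁ x₃ + phiA q m hm (aop q m x₁ x₃) (aop q m x₂ x₃)) :=
  ⟨(Fin.snocEquiv fun _ => ZMod q).symm.bijective,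
    fun A B => Prod.ext (aop_last hm A B) (redA_aop A B),
    phiA_self hm, phiA_cocycle hm⟩

/-- Z_q[T,T⁻¹]/((1-T)^{m+1}) is the abelian extension of
Z_q[T,T⁻¹]/((1-T)^m) by the 2-cocycle φ(Ā,B̄) = B_{m-1} - A_{m-1}:
the map f(A) = (A_m, Ā) is a bijection satisfying f(A*B) = (A_m + φ(Ā,B̄), Ā*B̄),
and φ is a quandle 2-cocycle. -/
theorem extension_one_minus_T (q m : ℕ) (hq : 0 < q) (hm : 0 < m) :
    Function.Bijective
      (fun A : Fin (m + 1) → ZMod q => (A (Fin.last m), redA q m A)) ∧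
    (∀ A B : Fin (m + 1) → ZMod q,
      (aop q (m + 1) A B (Fin.last m), redA q m (aop q (m + 1) A B)) =
        (A (Fin.last m) + phiA q m hm (redA q m A) (redA q m B),
          aop q m (redA q m A) (redA q m B))) ∧
    (∀ x : Fin m → ZMod q, phiA q m hm x x = 0) ∧
    (∀ x₁ x₂ x₃ : Fin m → ZMod q,
      phiA q m hm x₁ x₂ + phiA q m hm (aop q m x₁ x₂) x₃ =
        phiA q m hm x₁ x₃ + phiA q m hm (aop q m x₁ x₃) (aop q m x₂ x₃)) :=
  extension_one_minus_T_general q m hm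
end

section
/- Let X = Z_q[T,T^{-1}]/((1-T)^m) be the Alexander quandle with a*b = Ta+(1-T)b. Define φ : X × X → Z/q by φ(A,B) = B_{m-1} - A_{m-1}, where A_{m-1}, B_{m-1} are the coefficients of (1-T)^{m-1} in the unique expansions A = Σ_{j=0}^{m-1} A_j (1-T)^j, B = Σ_{j=0}^{m-1} B_j (1-T)^j with A_j, B_j ∈ Z/q. Then φ is a quandle 2-cocycle: φ(x,x) = 0 for all x, and φ(x₁,x₂) + φ(x₁*x₂, x₃) = φ(x₁,x₃) + φ(x₁*x₃, x₂*x₃) for all x₁,x₂,x₃ ∈ X. -/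
def IsQuandleTwoCocycle {X A : Type*} [Zero A] [Add A] (op : X → X → X) (φ : X → X → A) : Prop :=
  (∀ x, φ x x = 0) ∧
    ∀ x₁ x₂ x₃, φ x₁ x₂ + φ (op x₁ x₂) x₃ = φ x₁ x₃ + φ (op x₁ x₃) (op x₂ x₃)

theorem isQuandleTwoCocycle_map_sub_map_of_alexander {M A : Type*} [AddCommGroup M]
    [AddCommGroup A] (t : M → M) (f : M →+ A) :
    IsQuandleTwoCocycle (fun a b => t a + (b - t b)) (fun a b => f b - f a) := by
  refine ⟨fun x => sub_self (f x), fun x₁ x₂ x₃ => ?_⟩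
  simp only [map_add, map_sub]
  abel

theorem phi_top_coeff_is_cocycle_general (q m : ℕ) (hm : 0 < m) :
    (∀ x : Fin m → ZMod q, phiA q m hm x x = 0) ∧
    (∀ x₁ x₂ x₃ : Fin m → ZMod q,
      phiA q m hm x₁ x₂ + phiA q m hm (aop q m x₁ x₂) x₃ =
        phiA q m hm x₁ x₃ + phiA q m hm (aop q m x₁ x₃) (aop q m x₂ x₃)) := by
  exact isQuandleTwoCocycle_map_sub_map_of_alexander (mulT q m)
      (Pi.evalAddMonoidHom (fun _ => ZMod q) ⟨m - 1, by omega⟩)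

/-- φ(A,B) = B_{m-1} - A_{m-1} is a quandle 2-cocycle of the Alexander
quandle Z_q[T,T⁻¹]/((1-T)^m). -/
theorem phi_top_coeff_is_cocycle (q m : ℕ) (hq : 0 < q) (hm : 0 < m) :
    (∀ x : Fin m → ZMod q, phiA q m hm x x = 0) ∧
    (∀ x₁ x₂ x₃ : Fin m → ZMod q,
      phiA q m hm x₁ x₂ + phiA q m hm (aop q m x₁ x₂) x₃ =
        phiA q m hm x₁ x₃ + phiA q m hm (aop q m x₁ x₃) (aop q m x₂ x₃)) :=
  phi_top_coeff_is_cocycle_general q m hm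
end

section
/- Let q ≥ 2, m ≥ 1, X = Z_{q^m}[T,T^{-1}]/(T-1+q) (Z/q^m with a*b=(1-q)a+qb), and φ : X×X → Z/q the 2-cocycle defined by φ(x,y) = (s(x)*s(y) - s(x*y))/q^m where s is the canonical section Z/q^m → Z/q^{m+1}. Then φ evaluated on the 2-cycle c = (0,1) + (q, q^{m-1}+q-1) equals 1 ∈ Z/q; in particular φ is not a coboundary, and hence the extension Z_{q^{m+1}}[T,T^{-1}]/(T-1+q) of X is a non-trivial abelian extension (not isomorphic to the product quandle Z/q × X via a map covering the identity). -/
section Cycle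

variable {X A : Type*} (op : X → X → X) (φ : X → X → A) {x₀ y₀ x₁ y₁ : X}

theorem cocycle_cycle_eq_zero_of_coboundary [AddGroup A] (h₀ : op x₀ y₀ = x₁) (h₁ : op x₁ y₁ = x₀)
    {ψ : X → A} (hψ : ∀ x y, φ x y = ψ x - ψ (op x y)) :
    φ x₀ y₀ + φ x₁ y₁ = 0 := by
  rw [hψ, hψ, h₀, h₁, sub_add_sub_cancel, sub_self]

theorem apply_add_cycle_eq [AddSemigroup A] {B : Type*} (h₀ : op x₀ y₀ = x₁) (h₁ : op x₁ y₁ = x₀)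
    {f : A → X → B} (hf : ∀ a x y, f (a + φ x y) (op x y) = f a x) (a : A) :
    f (a + (φ x₀ y₀ + φ x₁ y₁)) x₀ = f a x₀ := by
  calc f (a + (φ x₀ y₀ + φ x₁ y₁)) x₀ = f (a + φ x₀ y₀ + φ x₁ y₁) (op x₁ y₁) := by
        rw [add_assoc, h₁]
    _ = f (a + φ x₀ y₀) (op x₀ y₀) := by rw [hf, h₀]
    _ = f a x₀ := hf _ _ _

end Cycle

theorem phiExt_eq_ediv (q m : ℕ) [NeZero q] (x y : ZMod (q ^ m)) :
    phiExt q m x y = (((1 - q) * x.val + q * y.val : ℤ) / (q ^ m : ℕ) : ℤ) := by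
  have hN : (0 : ℤ) < (q ^ m : ℕ) := by have := Nat.pos_of_neZero q; positivity
  have hsec (z : ZMod (q ^ m)) : sec q m z = ((z.val : ℤ) : ZMod (q ^ (m + 1))) := by
    simp [sec]
  set v : ℤ := (1 - q) * x.val + q * y.val
  have hdop : dop q x y = (v : ZMod (q ^ m)) := by simp [dop, v]
  have hdiff : dop q (sec q m x) (sec q m y) - sec q m (dop q x y)
      = (((q ^ m : ℕ) * (v / (q ^ m : ℕ)) : ℤ) : ZMod (q ^ (m + 1))) := by
    rw [hsec, hsec, hsec, hdop, ZMod.val_intCast]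
    have hlift : dop q ((x.val : ℤ) : ZMod (q ^ (m + 1))) ((y.val : ℤ) : ZMod (q ^ (m + 1)))
        = (v : ZMod (q ^ (m + 1))) := by
      simp only [dop, v]; push_cast; ring
    rw [hlift]
    nth_rw 1 [← Int.emod_add_mul_ediv v (q ^ m : ℕ)]
    push_cast; ring
  have hval : ((((q ^ m : ℕ) * (v / (q ^ m : ℕ)) : ℤ) : ZMod (q ^ (m + 1))).val : ℤ)
      = (q ^ m : ℕ) * (v / (q ^ m : ℕ) % q) := by
    rw [ZMod.val_intCast, pow_succ, Nat.cast_mul]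
    exact Int.mul_emod_mul_of_pos _ _ hN
  rw [phiExt, hdiff, ← Int.cast_natCast, Int.natCast_div, hval,
    Int.mul_ediv_cancel_left _ hN.ne', ZMod.intCast_mod]

theorem dop_zero_one (q n : ℕ) : dop q (0 : ZMod n) 1 = q := by simp [dop]

theorem dop_natCast_pow_add_sub_one (q n m : ℕ) (hm : 1 ≤ m) :
    dop q (q : ZMod n) ((q : ZMod n) ^ (m - 1) + q - 1) = (q : ZMod n) ^ m := by
  obtain ⟨k, rfl⟩ : ∃ k, m = k + 1 := ⟨m - 1, by omega⟩
  simp only [dop, Nat.add_sub_cancel]; ring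

theorem phiExt_cycle_eq_one (q m : ℕ) (hq : 2 ≤ q) (hm : 1 ≤ m) :
    phiExt q m 0 1 + phiExt q m (q : ZMod (q ^ m)) ((q : ZMod (q ^ m)) ^ (m - 1) + q - 1) = 1 := by
  have : NeZero q := ⟨by omega⟩
  have : Fact (1 < q ^ m) := ⟨Nat.one_lt_pow (by omega) (by omega)⟩
  rw [phiExt_eq_ediv, phiExt_eq_ediv, ZMod.val_zero, ZMod.val_one]
  obtain rfl | ⟨n, rfl⟩ : m = 1 ∨ ∃ n, m = n + 2 := by
    rcases m with _ | _ | n <;> simp_all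
  · have hq0 : (q : ZMod (q ^ 1)) = 0 := by rw [pow_one, ZMod.natCast_self]
    simp [hq0, Int.ediv_self (show (q : ℤ) ≠ 0 by omega)]
  · have hq_le : q ≤ q ^ (n + 1) := Nat.le_self_pow n.succ_ne_zero q
    have hpow : q ^ (n + 2) = q * q ^ (n + 1) := pow_succ' q (n + 1)
    have hqlt : q < q ^ (n + 2) := by nlinarith
    have hzlt : q ^ (n + 1) + q - 1 < q ^ (n + 2) := by
      have : 2 * q ^ (n + 1) ≤ q * q ^ (n + 1) := Nat.mul_le_mul_right _ hq
      omega
    have hz : (q : ZMod (q ^ (n + 2))) ^ (n + 2 - 1) + q - 1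
        = ((q ^ (n + 1) + q - 1 : ℕ) : ZMod (q ^ (n + 2))) := by
      rw [Nat.cast_sub (by omega)]; push_cast; ring
    rw [hz, ZMod.val_natCast_of_lt hqlt, ZMod.val_natCast_of_lt hzlt]
    have hnum : (1 - q) * q + q * ((q ^ (n + 1) + q - 1 : ℕ) : ℤ) = (q ^ (n + 2) : ℕ) := by
      rw [Nat.cast_sub (by omega)]; push_cast; ring
    have hpos : (0 : ℤ) < (q ^ (n + 2) : ℕ) := by positivity
    rw [hnum, Int.ediv_self hpos.ne', Nat.cast_zero, Nat.cast_one, mul_zero, zero_add, mul_one,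
      Int.ediv_eq_zero_of_lt (by positivity) (by exact_mod_cast hqlt)]
    simp

/-- φ evaluates to 1 on the 2-cycle c = (0,1) + (q, q^{m-1}+q-1); hence φ
is not a coboundary, and the extension is not equivalent to the product quandle
Z/q × X (product of the trivial quandle on Z/q and X) via a map covering the identity. -/
theorem extension_nontrivial (q m : ℕ) (hq : 2 ≤ q) (hm : 1 ≤ m) :
    (phiExt q m 0 1
        + phiExt q m (q : ZMod (q ^ m)) ((q : ZMod (q ^ m)) ^ (m - 1) + q - 1) = 1) ∧
    (¬ ∃ ψ : ZMod (q ^ m) → ZMod q,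
        ∀ x y : ZMod (q ^ m), phiExt q m x y = ψ x - ψ (dop q x y)) ∧
    (¬ ∃ F : ZMod q × ZMod (q ^ m) → ZMod q × ZMod (q ^ m),
        Function.Bijective F ∧
        (∀ u v : ZMod q × ZMod (q ^ m),
          F (u.1 + phiExt q m u.2 v.2, dop q u.2 v.2) =
            ((F u).1, dop q (F u).2 (F v).2)) ∧
        (∀ u : ZMod q × ZMod (q ^ m), (F u).2 = u.2)) := by
  have : Fact (1 < q) := ⟨hq⟩
  have h₀ : dop q (0 : ZMod (q ^ m)) 1 = q := dop_zero_one q _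
  have h₁ : dop q (q : ZMod (q ^ m)) ((q : ZMod (q ^ m)) ^ (m - 1) + q - 1) = 0 := by
    rw [dop_natCast_pow_add_sub_one q _ m hm, ← Nat.cast_pow, ZMod.natCast_self]
  have hcycle := phiExt_cycle_eq_one q m hq hm
  refine ⟨hcycle, ?_, ?_⟩
  · rintro ⟨ψ, hψ⟩
    exact zero_ne_one <|
      (cocycle_cycle_eq_zero_of_coboundary (dop q) (phiExt q m) h₀ h₁ hψ).symm.trans hcycle
  · rintro ⟨F, hF_bij, hF_hom, hF_snd⟩
    have hf (a : ZMod q) (x y : ZMod (q ^ m)) :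
        (F (a + phiExt q m x y, dop q x y)).1 = (F (a, x)).1 :=
      congrArg Prod.fst (hF_hom (a, x) (0, y)) |>.trans rfl
    have h := apply_add_cycle_eq (dop q) (phiExt q m) h₀ h₁ (f := fun a x => (F (a, x)).1) hf 0
    rw [hcycle, zero_add] at h
    have hF_eq : F (1, 0) = F (0, 0) := Prod.ext h (by rw [hF_snd, hF_snd])
    exact one_ne_zero (congrArg Prod.fst (hF_bij.1 hF_eq))
end

section
/- For every positive integer n, there exists a quandle 2-cocycle φ ∈ Z²_Q(R_{2n}; Z/2) such that the dihedral quandle R_{4n} is isomorphic to the abelian extension E(R_{2n}, Z/2, φ). -/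
/-!
Reduction modulo `N` is a two-to-one quandle map `R_{2N} → R_N`. Record `a ∈ R_{2N}` as the pair
(its residue mod `N`, the half `[0, N)` or `[N, 2N)` of its representative). Since `2 * b` only
depends on `b` mod `N` and adding `N` switches halves, the half of `a * b = 2b - a` is the half of
`a` plus a function `φ` of the two residues; so `R_{2N} ≅ E(R_N, Z/2, φ)`, and the quandle axioms
of `R_{2N}`, transported along this bijection, are exactly the cocycle conditions on `φ`.
-/

open Quandles

-- Mathlib's quandles act on the left: `b ◃ a` is the paper's `a * b`.
theorem Quandle.isCocycle_of_surjective_extension {Q X A : Type*} [Quandle Q]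
    [AddLeftCancelMonoid A] (actX : X → X → X) (φ : X → X → A) (f : Q → A × X)
    (hf : Function.Surjective fun a => (f a).2)
    (hmap : ∀ a b, f (b ◃ a) = ((f a).1 + φ (f a).2 (f b).2, actX (f a).2 (f b).2)) :
    (∀ x, φ x x = 0) ∧
      ∀ x₁ x₂ x₃, φ x₁ x₂ + φ (actX x₁ x₂) x₃ = φ x₁ x₃ + φ (actX x₁ x₃) (actX x₂ x₃) := by
  refine ⟨fun x => ?_, fun x₁ x₂ x₃ => ?_⟩
  · obtain ⟨a, rfl⟩ := hf x
    have h := congrArg Prod.fst (hmap a a)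
    rwa [Quandle.fix, left_eq_add] at h
  · obtain ⟨a₁, rfl⟩ := hf x₁
    obtain ⟨a₂, rfl⟩ := hf x₂
    obtain ⟨a₃, rfl⟩ := hf x₃
    have h := congrArg Prod.fst (congrArg f (Shelf.self_distrib (x := a₃) (y := a₂) (z := a₁)))
    simp only [hmap, add_assoc] at h
    exact add_left_cancel h

namespace DihedralDoubleCover

theorem natCast_add_self (N : ℕ) : (N : ZMod (2 * N)) + N = 0 := by
  rw [← Nat.cast_add, ← two_mul, ZMod.natCast_self]

variable {N : ℕ}

def lift (x : ZMod N) : ZMod (2 * N) := x.val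

def sheet (a : ZMod (2 * N)) : ZMod 2 := if a.val < N then 0 else 1

abbrev reduce : ZMod (2 * N) →+* ZMod N := ZMod.castHom (dvd_mul_left N 2) _

def cocycle (x y : ZMod N) : ZMod 2 := sheet (2 * lift y - lift x)

def split (a : ZMod (2 * N)) : ZMod 2 × ZMod N := (sheet a, reduce a)

variable [NeZero N]

theorem val_reduce (a : ZMod (2 * N)) : (reduce a).val = a.val % N := by
  rw [ZMod.castHom_apply, ← ZMod.natCast_val, ZMod.val_natCast]

theorem sheet_add_natCast (a : ZMod (2 * N)) : sheet (a + (N : ZMod (2 * N))) = sheet a + 1 := by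
  have hval : (a + N).val = (a.val + N) % (2 * N) := by
    rw [ZMod.val_add, ZMod.val_natCast_of_lt (by have := NeZero.pos N; omega)]
  have := a.val_lt
  unfold sheet
  by_cases h : a.val < N
  · rw [hval, Nat.mod_eq_of_lt (by omega), if_pos h, if_neg (by omega)]
    rfl
  · rw [hval, Nat.mod_eq_sub_mod (by omega), Nat.mod_eq_of_lt (by omega), if_neg h,
      if_pos (by omega)]
    rfl

theorem eq_lift_reduce_or (a : ZMod (2 * N)) :
    (sheet a = 0 ∧ a = lift (reduce a)) ∨ (sheet a = 1 ∧ a = lift (reduce a) + N) := by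
  have := a.val_lt
  have hself : ((a.val : ℕ) : ZMod (2 * N)) = a := ZMod.natCast_zmod_val a
  unfold lift sheet
  rw [val_reduce]
  by_cases h : a.val < N
  · exact Or.inl ⟨if_pos h, by rw [Nat.mod_eq_of_lt h, hself]⟩
  · refine Or.inr ⟨if_neg h, ?_⟩
    rw [← Nat.cast_add, Nat.mod_eq_sub_mod (by omega), Nat.mod_eq_of_lt (by omega),
      Nat.sub_add_cancel (by omega), hself]

theorem two_mul_eq_two_mul_lift_reduce (b : ZMod (2 * N)) : 2 * b = 2 * lift (reduce b) := by
  rcases eq_lift_reduce_or b with ⟨-, hb⟩ | ⟨-, hb⟩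
  · rw [← hb]
  · conv_lhs => rw [hb, mul_add, two_mul (N : ZMod (2 * N)), natCast_add_self N, add_zero]

theorem sheet_two_mul_sub (a b : ZMod (2 * N)) :
    sheet (2 * b - a) = sheet a + cocycle (reduce a) (reduce b) := by
  rw [two_mul_eq_two_mul_lift_reduce b, cocycle]
  rcases eq_lift_reduce_or a with ⟨ha, ha'⟩ | ⟨ha, ha'⟩
  · conv_lhs => rw [ha']
    rw [ha, zero_add]
  · conv_lhs => rw [ha']
    rw [ha, sub_add_eq_sub_sub, sub_eq_add_neg _ (N : ZMod (2 * N)),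
      neg_eq_of_add_eq_zero_left (natCast_add_self N), sheet_add_natCast, add_comm]

theorem split_two_mul_sub (a b : ZMod (2 * N)) :
    split (2 * b - a) =
      ((split a).1 + cocycle (split a).2 (split b).2, 2 * (split b).2 - (split a).2) := by
  simp only [split, sheet_two_mul_sub, map_sub, map_mul, map_ofNat]

theorem split_injective : Function.Injective (split (N := N)) := by
  intro a b h
  obtain ⟨hs, hr⟩ := Prod.ext_iff.mp h
  simp only [split] at hs hr
  rcases eq_lift_reduce_or a with ⟨ha, ha'⟩ | ⟨ha, ha'⟩ <;>
    rcases eq_lift_reduce_or b with ⟨hb, hb'⟩ | ⟨hb, hb'⟩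
  · rw [ha', hb', hr]
  · exact absurd (ha.symm.trans (hs.trans hb)) zero_ne_one
  · exact absurd (hb.symm.trans (hs.symm.trans ha)) zero_ne_one
  · rw [ha', hb', hr]

theorem split_bijective : Function.Bijective (split (N := N)) := by
  rw [Fintype.bijective_iff_injective_and_card]
  refine ⟨split_injective, ?_⟩
  simp only [Fintype.card_prod, ZMod.card]

theorem isQuandleCocycle_cocycle :
    (∀ x : ZMod N, cocycle x x = 0) ∧
      ∀ x₁ x₂ x₃ : ZMod N, cocycle x₁ x₂ + cocycle (2 * x₂ - x₁) x₃ =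
        cocycle x₁ x₃ + cocycle (2 * x₃ - x₁) (2 * x₃ - x₂) :=
  Quandle.isCocycle_of_surjective_extension (Q := Quandle.Dihedral (2 * N))
    (fun x y => 2 * y - x) cocycle split (Prod.snd_surjective.comp split_bijective.surjective)
    split_two_mul_sub

end DihedralDoubleCover

/-- for every positive n there is a quandle 2-cocycle
φ ∈ Z²_Q(R_{2n}; Z/2) such that R_{4n} ≅ E(R_{2n}, Z/2, φ). -/
theorem dihedral_double_extension (n : ℕ) (hn : 0 < n) :
    ∃ φ : ZMod (2 * n) → ZMod (2 * n) → ZMod 2,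
      (∀ x : ZMod (2 * n), φ x x = 0) ∧
      (∀ x₁ x₂ x₃ : ZMod (2 * n),
        φ x₁ x₂ + φ (2 * x₂ - x₁) x₃ =
          φ x₁ x₃ + φ (2 * x₃ - x₁) (2 * x₃ - x₂)) ∧
      ∃ f : ZMod (4 * n) → ZMod 2 × ZMod (2 * n),
        Function.Bijective f ∧
        ∀ a b : ZMod (4 * n),
          f (2 * b - a) = ((f a).1 + φ (f a).2 (f b).2, 2 * (f b).2 - (f a).2) := by
  have : NeZero (2 * n) := ⟨by omega⟩
  rw [show 4 * n = 2 * (2 * n) by ring]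
  obtain ⟨hself, hcocycle⟩ := DihedralDoubleCover.isQuandleCocycle_cocycle (N := 2 * n)
  exact ⟨DihedralDoubleCover.cocycle, hself, hcocycle, DihedralDoubleCover.split,
    DihedralDoubleCover.split_bijective, DihedralDoubleCover.split_two_mul_sub⟩
end
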